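/- Let V be a finite-dimensional real vector space and L₁, L₂ ⊆ V × V* Lagrangian subspaces. Then their sum L₁ + L₂ := {(v, α + β) ∈ V × V* : (v,α) ∈ L₁ and (v,β) ∈ L₂} is a Lagrangian subspace of V × V*. (Linear-algebra form of the sum/tensor product of Dirac structures.) -/
import Mathlib


/-- A subspace `L ⊆ V × V*` is Lagrangian if it equals its orthogonal
complement with respect to the symmetric pairing
`⟨(v,α),(w,β)⟩ = α(w) + β(v)`. -/
def IsLagrangian {V : Type*} [AddCommGroup V] [Module ℝ V]
    (L : Submodule ℝ (V × Module.Dual ℝ V)) : Prop :=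
  ∀ x : V × Module.Dual ℝ V, x ∈ L ↔ ∀ y ∈ L, x.2 y.1 + y.2 x.1 = 0

/-- For a Lagrangian `L`, the elements `(0, φ) ∈ L` are exactly those with
`φ` in the annihilator of the projection of `L` to `V`. -/
lemma isLagrangian_zero_mem_iff {V : Type*} [AddCommGroup V] [Module ℝ V]
    {L : Submodule ℝ (V × Module.Dual ℝ V)} (hL : IsLagrangian L)
    (φ : Module.Dual ℝ V) :
    (0, φ) ∈ L ↔ φ ∈ (L.map (LinearMap.fst ℝ V (Module.Dual ℝ V))).dualAnnihilator := by
  rw [hL, Submodule.mem_dualAnnihilator]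
  constructor
  · rintro h w ⟨y, hy, rfl⟩
    simpa using h y hy
  · intro h y hy
    have := h y.1 ⟨y, hy, rfl⟩
    simpa using this

/-- For a Lagrangian `L`, a vector `v` lies in the projection of `L` iff
it is annihilated by every `φ` with `(0, φ) ∈ L`. -/
lemma isLagrangian_mem_proj {V : Type*} [AddCommGroup V] [Module ℝ V]
    {L : Submodule ℝ (V × Module.Dual ℝ V)} (hL : IsLagrangian L)
    (v : V) (h : ∀ φ : Module.Dual ℝ V, (0, φ) ∈ L → φ v = 0) :
    v ∈ L.map (LinearMap.fst ℝ V (Module.Dual ℝ V)) := by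
  rw [← Subspace.dualAnnihilator_dualCoannihilator_eq
    (W := L.map (LinearMap.fst ℝ V (Module.Dual ℝ V))), Submodule.mem_dualCoannihilator]
  intro φ hφ
  exact h φ ((isLagrangian_zero_mem_iff hL φ).mpr hφ)

/-- The sum `L₁ + L₂ = {(v, α + β) : (v,α) ∈ L₁, (v,β) ∈ L₂}` of two Lagrangian
subspaces of `V × V*` is again a Lagrangian subspace: it coincides with its
orthogonal complement for the pairing `⟨(v,α),(w,β)⟩ = α(w) + β(v)`. -/
theorem sum_of_lagrangians_is_lagrangian
    {V : Type*} [AddCommGroup V] [Module ℝ V] [FiniteDimensional ℝ V]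
    (L₁ L₂ : Submodule ℝ (V × Module.Dual ℝ V))
    (hL₁ : IsLagrangian L₁) (hL₂ : IsLagrangian L₂) :
    ∀ x : V × Module.Dual ℝ V,
      (∃ α β : Module.Dual ℝ V, (x.1, α) ∈ L₁ ∧ (x.1, β) ∈ L₂ ∧ x.2 = α + β) ↔
      ∀ y : V × Module.Dual ℝ V,
        (∃ α β : Module.Dual ℝ V, (y.1, α) ∈ L₁ ∧ (y.1, β) ∈ L₂ ∧ y.2 = α + β) →
        x.2 y.1 + y.2 x.1 = 0 := by
  intro x
  constructor
  · rintro ⟨α, β, hα, hβ, hx⟩ y ⟨α', β', hα', hβ', hy⟩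
    have h1 := (hL₁ (x.1, α)).mp hα (y.1, α') hα'
    have h2 := (hL₂ (x.1, β)).mp hβ (y.1, β') hβ'
    simp only at h1 h2
    rw [hx, hy]
    simp only [LinearMap.add_apply]
    linarith
  · intro h
    obtain ⟨v, γ⟩ := x
    simp only at h ⊢
    -- Step 1: v lies in the projections of L₁ and L₂.
    have hv₁ : v ∈ L₁.map (LinearMap.fst ℝ V (Module.Dual ℝ V)) := by
      refine isLagrangian_mem_proj hL₁ v fun φ hφ => ?_
      have := h (0, φ) ⟨φ, 0, hφ, L₂.zero_mem, by simp⟩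
      simpa using this
    have hv₂ : v ∈ L₂.map (LinearMap.fst ℝ V (Module.Dual ℝ V)) := by
      refine isLagrangian_mem_proj hL₂ v fun φ hφ => ?_
      have := h (0, φ) ⟨0, φ, L₁.zero_mem, hφ, by simp⟩
      simpa using this
    obtain ⟨⟨v₁, α₀⟩, hα₀, (hv1 : v₁ = v)⟩ := hv₁
    obtain ⟨⟨v₂, β₀⟩, hβ₀, (hv2 : v₂ = v)⟩ := hv₂
    subst hv1 hv2
    -- Step 2: δ := γ - α₀ - β₀ annihilates pr₁ L₁ ⊓ pr₁ L₂.
    set P₁ := L₁.map (LinearMap.fst ℝ V (Module.Dual ℝ V)) with hP₁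
    set P₂ := L₂.map (LinearMap.fst ℝ V (Module.Dual ℝ V)) with hP₂
    have hδ : γ - α₀ - β₀ ∈ (P₁ ⊓ P₂).dualAnnihilator := by
      rw [Submodule.mem_dualAnnihilator]
      rintro w ⟨⟨⟨w₁, α⟩, hαm, (hw1 : w₁ = w)⟩, ⟨⟨w₂, β⟩, hβm, (hw2 : w₂ = w)⟩⟩
      subst hw1 hw2
      have h0 := h (w₂, α + β) ⟨α, β, hαm, hβm, rfl⟩
      simp only [LinearMap.add_apply] at h0
      have h1 := (hL₁ (w₂, α)).mp hαm (v₂, α₀) hα₀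
      have h2 := (hL₂ (w₂, β)).mp hβm (v₂, β₀) hβ₀
      simp only at h1 h2
      simp only [LinearMap.sub_apply]
      linarith
    rw [Subspace.dualAnnihilator_inf_eq, Submodule.mem_sup] at hδ
    obtain ⟨φ₁, hφ₁, φ₂, hφ₂, hsum⟩ := hδ
    refine ⟨α₀ + φ₁, β₀ + φ₂, ?_, ?_, ?_⟩
    · have : ((v₂, α₀) : V × Module.Dual ℝ V) + (0, φ₁) ∈ L₁ :=
        L₁.add_mem hα₀ ((isLagrangian_zero_mem_iff hL₁ φ₁).mpr hφ₁)
      simpa using this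
    · have : ((v₂, β₀) : V × Module.Dual ℝ V) + (0, φ₂) ∈ L₂ :=
        L₂.add_mem hβ₀ ((isLagrangian_zero_mem_iff hL₂ φ₂).mpr hφ₂)
      simpa using this
    · have : γ - α₀ - β₀ = φ₁ + φ₂ := hsum.symm ▸ rfl
      abel_nf
      abel_nf at this
      linear_combination (norm := abel) this
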